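/- arXiv:2005.14335 — 2 statements merged into one kernel-verified Lean document; each statement's English description precedes it below -/
import Mathlib

section
/- Conversely to the greedy correctness: if the greedy strategy fails — i.e., at some stage positions 1..r are covered with r < n and no position i ≤ r+1 has an occurrence of a dictionary string starting at i and ending at position ≥ r+1 — then no valid decomposition of t from the dictionary exists. -/
/-- A valid decomposition of the text `t` from the dictionary `s^1,…,s^m`. -/
def ValidDecomposition {α : Type*} {m : ℕ} (t : List α) (s : Fin m → List α) : Prop :=
  ∃ (z : ℕ) (idx : ℕ → Fin m) (q : ℕ → ℕ),
    0 < z ∧ q 0 = 1 ∧ q (z - 1) = t.length - (s (idx (z - 1))).length + 1 ∧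
    (∀ j, 0 < j → j < z → q j ≤ q (j - 1) + (s (idx (j - 1))).length) ∧
    (∀ j < z, (t.drop (q j - 1)).take (s (idx j)).length = s (idx j))

/-!
Take the last piece of the decomposition that starts at or before position `r + 1`. Either it is
the final piece, which ends at position `n > r`, or the next piece starts after `r + 1`; since
consecutive pieces overlap or abut, the piece then ends at or after `r + 1`. Either way it is an
occurrence that the failing greedy step would have found.
-/

/-- Positions are 1-indexed; by truncated subtraction, position `0` behaves like `1`. -/
def OccursAt {α : Type*} (t w : List α) (i : ℕ) : Prop :=
  (t.drop (i - 1)).take w.length = w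

namespace OccursAt

variable {α : Type*} {t w : List α} {i : ℕ}

theorem length_le (h : OccursAt t w i) : w.length ≤ t.length - (i - 1) := by
  have h := congrArg List.length h
  rw [List.length_take, List.length_drop] at h
  omega

theorem max_one (h : OccursAt t w i) : OccursAt t w (max i 1) := by
  unfold OccursAt at h ⊢
  rwa [show max i 1 - 1 = i - 1 by omega]

end OccursAt

theorem exists_mem_Ico_of_chain {z p : ℕ} {q ℓ : ℕ → ℕ} (hz : 0 < z) (hstart : q 0 ≤ p)
    (hend : p < q (z - 1) + ℓ (z - 1))
    (hchain : ∀ j, 0 < j → j < z → q j ≤ q (j - 1) + ℓ (j - 1)) :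
    ∃ j < z, q j ≤ p ∧ p < q j + ℓ j := by
  set j := Nat.findGreatest (fun j => q j ≤ p) (z - 1)
  have hjz : j < z := by have := Nat.findGreatest_le (P := fun j => q j ≤ p) (z - 1); omega
  have hqj : q j ≤ p := Nat.findGreatest_spec (P := fun j => q j ≤ p) (Nat.zero_le _) hstart
  refine ⟨j, hjz, hqj, ?_⟩
  by_cases hlast : j = z - 1
  · rwa [hlast]
  · have hnext : p < q (j + 1) := not_le.mp <|
      Nat.findGreatest_is_greatest (P := fun j => q j ≤ p) (Nat.lt_succ_self j) (by omega)
    have := hchain (j + 1) (Nat.succ_pos j) (by omega)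
    simp only [Nat.add_sub_cancel] at this
    omega

theorem ValidDecomposition.exists_occursAt_cover {α : Type*} {m : ℕ} {t : List α}
    {s : Fin m → List α} (hd : ValidDecomposition t s) {p : ℕ} (hp : 1 ≤ p)
    (hpt : p ≤ t.length) :
    ∃ i j, 1 ≤ i ∧ i ≤ p ∧ OccursAt t (s j) i ∧ p < i + (s j).length := by
  obtain ⟨z, idx, q, hz, hq0, hqlast, hchain, hocc⟩ := hd
  have hocc_at : ∀ j < z, OccursAt t (s (idx j)) (q j) := hocc
  have hlast_fits := (hocc_at (z - 1) (by omega)).length_le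
  obtain ⟨j, hjz, hqj, hpj⟩ := exists_mem_Ico_of_chain (p := p) (q := q) (ℓ := fun j => (s (idx j)).length) hz
    (by omega) (by omega) hchain
  exact ⟨max (q j) 1, idx j, le_max_right _ _, max_le hqj hp, (hocc_at j hjz).max_one, by omega⟩

theorem stmt11 {α : Type*} (n m : ℕ) (t : List α) (ht : t.length = n)
    (s : Fin m → List α) (r : ℕ) (hr : r < n)
    (hno : ∀ i, 1 ≤ i → i ≤ r + 1 → ∀ j : Fin m,
      (t.drop (i - 1)).take (s j).length = s j → i + (s j).length - 1 < r + 1) :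
    ¬ ValidDecomposition t s := by
  intro hd
  obtain ⟨i, j, hi, hir, hocc, hend⟩ := hd.exists_occursAt_cover (p := r + 1) (by omega) (by omega)
  have := hno i hi hir j hocc
  omega
end

section
/- Binary-search invariant for locating the left boundary: let b_1,...,b_n be a monotone boolean sequence derived from the sorted suffix array, where b_i = −1 if t[suf_i, min(n, suf_i + |u| − 1)] < u, b_i = 0 if equal, b_i = 1 if greater (with respect to lexicographic comparison of the length-|u| prefix). Then the sequence (b_i) is non-decreasing in i. -/
/-! Truncating to the first `k` letters is monotone for the lexicographic order. Since the
suffix array lists the suffixes in increasing order, their truncations to length `|u|` are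
non-decreasing, so the comparison of the truncation with `u` can only move from `<` through
`=` to `>` as the index grows. -/

theorem List.take_le_take_of_lt {α : Type*} [LinearOrder α] {l₁ l₂ : List α} (h : l₁ < l₂)
    (k : ℕ) : l₁.take k ≤ l₂.take k := by
  induction h generalizing k with
  | nil => rw [List.take_nil]; exact not_lt.mp (List.not_lt_nil _)
  | cons _ ih =>
    cases k with
    | zero => exact le_rfl
    | succ k =>
      rcases (ih k).lt_or_eq with hlt | heq
      · exact le_of_lt (List.Lex.cons hlt :)
      · rw [List.take_succ_cons, List.take_succ_cons, heq]
  | rel hab =>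
    cases k with
    | zero => exact le_rfl
    | succ k => exact le_of_lt (List.Lex.rel hab :)

theorem List.take_monotone {α : Type*} [LinearOrder α] (k : ℕ) :
    Monotone (List.take k : List α → List α) := fun _ _ h =>
  h.lt_or_eq.elim (fun hlt => List.take_le_take_of_lt hlt k) fun heq => heq ▸ le_rfl

theorem stmt15 {α : Type*} [LinearOrder α] (t : List α)
    (suf : Equiv.Perm (Fin t.length))
    (hsorted : ∀ i j : Fin t.length, i < j →
      t.drop (suf i : ℕ) < t.drop (suf j : ℕ))
    (u : List α) (i j : Fin t.length) (hij : i ≤ j) :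
    ((t.drop (suf j : ℕ)).take u.length < u →
      (t.drop (suf i : ℕ)).take u.length < u) ∧
    (u < (t.drop (suf i : ℕ)).take u.length →
      u < (t.drop (suf j : ℕ)).take u.length) := by
  have hsuffixes : Monotone fun k => t.drop (suf k : ℕ) := StrictMono.monotone hsorted
  have htake := List.take_monotone u.length (hsuffixes hij)
  exact ⟨htake.trans_lt, fun hi => hi.trans_le htake⟩
end
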